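/- (Cayley–Bacharach for arithmetically Gorenstein schemes) Suppose that Γ ⊂ ℙ(U) is a finite arithmetically Gorenstein scheme, and let Γ₁, Γ₂ be mutually residual subschemes of Γ. For any integer d < a(Γ), the failure of Γ₁ to impose independent conditions on forms of degree d is equal to the dimension of the space of forms of degree a(Γ) − d vanishing on Γ₂. -/

import Mathlib

/-!
# Cayley–Bacharach for arithmetically Gorenstein schemes
(Eisenbud–Popescu, Corollary 2.9)

We model a finite scheme `Γ ⊂ ℙ(U) = ℙⁿ⁻¹` over a field `k` by its coordinate algebra
`A = H⁰(O_Γ)` (a finite-dimensional commutative `k`-algebra) together with the restrictions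
`x : Fin n → A` of the ambient coordinates (a trivialization of `O_Γ(1)` being chosen).
The image `Uᵈ ⊆ A` of the restriction map `H⁰(ℙ(U), O(d)) → H⁰(O_Γ(d)) = A` is the span of
the degree-`d` monomials in the `x i`.

* `Γ` *fails to impose independent conditions* on forms of degree `d` iff `Uᵈ ≠ A`; `a(Γ)` is
  the largest `a` with `Uᵃ ≠ A`.
* By Serre duality, `H⁰(K_Γ(-e))` is the `k`-linear dual of `H⁰(O_Γ(e)) = A`, the Serre
  pairing being evaluation; by graded local duality the degree-`m` piece of the canonical
  module `ω_Γ` is the subspace `(U^{-m})^⊥ ⊆ Dual k A` (where `U^e = 0` for `e < 0`).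
* `Γ` is *arithmetically Gorenstein* — i.e. its homogeneous coordinate ring `S_Γ` is
  Gorenstein — iff there is a degree-`a` isomorphism of graded modules `S_Γ(a) ≅ ω_Γ`, i.e.
  iff there is a functional `Φ : Dual k A` such that `f ↦ Φ(f·–)` is bijective and carries
  `U^{m+a}` onto `(ω_Γ)_m` for every `m` (`IsArithGorenstein` below).
* Subschemes `Γ₁, Γ₂ ⊆ Γ` correspond to ideals `I, J ⊆ A`; they are *mutually residual* iff
  `J = (0 : I)` and `I = (0 : J)`.
* The *failure of `Γ₁` to impose independent conditions* on forms of degree `d` is the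
  dimension of the cokernel of the restriction map `Uᵈ → H⁰(O_{Γ₁}(d)) = A/I`, and the
  *space of forms of degree `e` vanishing on `Γ₂`* (forms counted on `Γ`, i.e. modulo those
  vanishing on all of `Γ`) is `U^e ⊓ J`.
-/

open Module Submodule

/-- The span `Uᵈ ⊆ A = H⁰(O_Γ(d))` of the restrictions to `Γ` of the degree-`d` forms. -/
def degForms (k A : Type) [Field k] [CommRing A] [Algebra k A]
    (n : ℕ) (x : Fin n → A) (d : ℕ) : Submodule k A :=
  Submodule.span k {a | ∃ m : Fin n → ℕ, (∑ i, m i) = d ∧ a = ∏ i, x i ^ m i}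

/-- `Uᵈ` for `d : ℤ`, with `Uᵈ = 0` in negative degrees. -/
def degFormsZ (k A : Type) [Field k] [CommRing A] [Algebra k A]
    (n : ℕ) (x : Fin n → A) (d : ℤ) : Submodule k A :=
  if 0 ≤ d then degForms k A n x d.toNat else ⊥

/-- The degree-`m` graded piece of the canonical module `ω_Γ`, viewed inside
`H⁰(K_Γ(-(-m)))… = Dual k A` via graded local duality: `(ω_Γ)_m = (U^{-m})^⊥`. -/
def omegaPiece (k A : Type) [Field k] [CommRing A] [Algebra k A]
    (n : ℕ) (x : Fin n → A) (m : ℤ) : Submodule k (Module.Dual k A) :=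
  (degFormsZ k A n x (-m)).dualAnnihilator

/-- The `k`-linear map `A → Dual k A`, `f ↦ Φ ∘ (f * ·)`; i.e. multiplication into the
(trivialized) canonical module. -/
def galeMap (k A : Type) [Field k] [CommRing A] [Algebra k A]
    (Φ : Module.Dual k A) : A →ₗ[k] Module.Dual k A where
  toFun a := Φ.comp (LinearMap.mulLeft k a)
  map_add' a b := by ext y; simp [add_mul]
  map_smul' c a := by ext y; simp [smul_mul_assoc]

/-- `Γ` is *arithmetically Gorenstein*: there is an isomorphism of graded modules
`S_Γ(a) ≅ ω_Γ` for some `a`, given by multiplication into a functional `Φ`. -/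
def IsArithGorenstein (k A : Type) [Field k] [CommRing A] [Algebra k A]
    (n : ℕ) (x : Fin n → A) : Prop :=
  ∃ (a : ℤ) (Φ : Module.Dual k A), Function.Bijective (galeMap k A Φ) ∧
    ∀ m : ℤ, Submodule.map (galeMap k A Φ) (degFormsZ k A n x (m + a)) = omegaPiece k A n x m

/-!
Multiplication into the Gorenstein functional `Φ` identifies `A` with `Dual k A`, carrying
`Uᵈ` onto `(U^{a-d})^⊥` and the ideal `I = (0 : J)` onto `J^⊥`. Hence `I + Uᵈ` corresponds
to `(U^{a-d} ⊓ J)^⊥`, and comparing codimensions gives the claim. The twist in the Gorenstein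
isomorphism is forced to equal `a(Γ)`: in degrees beyond it `Φ` pairs `U^b` against the
zero space, so `U^b = A`, while in degree exactly the twist it pairs `U^b` against the
constants, so `U^b ≠ A`.
-/

section LinearAlgebra

variable {K V : Type} [Field K] [AddCommGroup V] [Module K V] [FiniteDimensional K V]

theorem finrank_quotient_map_mkQ_eq_finrank_inf (e : V ≃ₗ[K] Dual K V)
    {P Q W W' : Subspace K V} (hP : P.map e.toLinearMap = W.dualAnnihilator)
    (hQ : Q.map e.toLinearMap = W'.dualAnnihilator) :
    finrank K ((V ⧸ P) ⧸ Q.map P.mkQ) = finrank K ↥(W' ⊓ W) := by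
  have hsup : (P ⊔ Q).map e.toLinearMap = (W' ⊓ W).dualAnnihilator := by
    rw [Submodule.map_sup, hP, hQ, Subspace.dualAnnihilator_inf_eq, sup_comm]
  have hrank : finrank K ↥(P ⊔ Q) = finrank K ↥(W' ⊓ W).dualAnnihilator := by
    rw [← hsup, LinearEquiv.finrank_map_eq]
  rw [(quotientQuotientEquivQuotientSup P Q).finrank_eq]
  have := (P ⊔ Q).finrank_quotient_add_finrank
  have := (W' ⊓ W).finrank_add_finrank_dualAnnihilator_eq
  omega

end LinearAlgebra

variable {k A : Type} [Field k] [CommRing A] [Algebra k A]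

@[simp]
theorem galeMap_apply (Φ : Dual k A) (f y : A) : galeMap k A Φ f y = Φ (f * y) := rfl

theorem map_galeMap_annihilator (Φ : Dual k A) (hΦ : Function.Bijective (galeMap k A Φ))
    (J : Ideal A) :
    (J.annihilator.restrictScalars k).map (galeMap k A Φ) =
      (J.restrictScalars k).dualAnnihilator := by
  apply le_antisymm
  · rintro _ ⟨f, hf, rfl⟩
    rw [mem_dualAnnihilator]
    intro y hy
    rw [galeMap_apply, ← smul_eq_mul, (Submodule.mem_annihilator.mp hf) y hy, map_zero]
  · intro φ hφ
    obtain ⟨f, rfl⟩ := hΦ.2 φ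
    refine ⟨f, Submodule.mem_annihilator.mpr fun y hy => hΦ.1 ?_, rfl⟩
    ext z
    rw [galeMap_apply, map_zero, LinearMap.zero_apply, smul_eq_mul, mul_assoc]
    exact (mem_dualAnnihilator _).mp hφ (y * z) (J.mul_mem_right z hy)

variable {n : ℕ} {x : Fin n → A}

theorem one_mem_degForms_zero : (1 : A) ∈ degForms k A n x 0 :=
  subset_span ⟨fun _ => 0, by simp, by simp⟩

theorem degFormsZ_natCast (d : ℕ) : degFormsZ k A n x d = degForms k A n x d := by
  simp [degFormsZ]

theorem degFormsZ_of_neg {d : ℤ} (hd : d < 0) : degFormsZ k A n x d = ⊥ := by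
  simp [degFormsZ, hd.not_ge]

theorem omegaPiece_neg_natCast (b : ℕ) :
    omegaPiece k A n x (-b) = (degForms k A n x b).dualAnnihilator := by
  rw [omegaPiece, neg_neg, degFormsZ_natCast]

section Gorenstein

variable {Φ : Dual k A} {t : ℤ}
  (hmap : ∀ m : ℤ, (degFormsZ k A n x (m + t)).map (galeMap k A Φ) = omegaPiece k A n x m)
include hmap

theorem degForms_eq_top_of_twist_lt {b : ℕ} (hb : t < b) : degForms k A n x b = ⊤ := by
  have h := hmap (-b)
  rw [degFormsZ_of_neg (by omega), Submodule.map_bot, omegaPiece_neg_natCast] at h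
  rw [← Subspace.dualAnnihilator_inj, dualAnnihilator_top, h]

theorem degForms_twist_ne_top [Nontrivial A] (hΦ : Function.Injective (galeMap k A Φ))
    (ht : 0 ≤ t) : degForms k A n x t.toNat ≠ ⊤ := by
  intro htop
  have h := hmap (-t.toNat)
  rw [omegaPiece_neg_natCast, htop, dualAnnihilator_top, Int.toNat_of_nonneg ht, neg_add_cancel,
    ← Nat.cast_zero, degFormsZ_natCast] at h
  have h1 : galeMap k A Φ 1 = 0 := by
    simpa [h] using mem_map_of_mem (f := galeMap k A Φ) (one_mem_degForms_zero (x := x))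
  exact one_ne_zero (hΦ (h1.trans (map_zero _).symm))

theorem twist_eq_of_regularity [Nontrivial A] (hΦ : Function.Injective (galeMap k A Φ))
    {a : ℕ} (hfail : degForms k A n x a ≠ ⊤) (hok : ∀ b : ℕ, a < b → degForms k A n x b = ⊤) :
    t = a := by
  rcases lt_trichotomy t a with h | h | h
  · exact absurd (degForms_eq_top_of_twist_lt hmap h) hfail
  · exact h
  · exact absurd (hok t.toNat (by omega)) (degForms_twist_ne_top hmap hΦ (by omega))

theorem map_galeMap_degForms {a d : ℕ} (ht : t = a) (hd : d ≤ a) :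
    (degForms k A n x d).map (galeMap k A Φ) = (degForms k A n x (a - d)).dualAnnihilator := by
  have h := hmap ((d : ℤ) - a)
  rwa [ht, sub_add_cancel, degFormsZ_natCast, omegaPiece, neg_sub, ← Nat.cast_sub hd,
    degFormsZ_natCast] at h

end Gorenstein

theorem cayley_bacharach_arith_gorenstein_general
    (k : Type) [Field k] (A : Type) [CommRing A] [Algebra k A] [FiniteDimensional k A]
    (n : ℕ) (x : Fin n → A)
    (hAG : IsArithGorenstein k A n x)
    -- `a = a(Γ)` is the largest integer such that `Γ` fails to impose independent conditions
    -- on forms of degree `a` (the second condition also says `Γ` is closed in `ℙ(U)`):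
    (a : ℕ) (hfail : degForms k A n x a ≠ ⊤) (hok : ∀ b : ℕ, a < b → degForms k A n x b = ⊤)
    -- `Γ₁ = Spec (A/I)` and `Γ₂ = Spec (A/J)` are mutually residual subschemes of `Γ`:
    (I J : Ideal A) (hI : I = J.annihilator)
    (d : ℕ) (hd : d < a) :
    -- the failure of `Γ₁` to impose independent conditions on forms of degree `d` ...
    Module.finrank k
        ((A ⧸ I.restrictScalars k) ⧸
          Submodule.map (I.restrictScalars k).mkQ (degForms k A n x d))
      -- ... equals the number of forms of degree `a - d` vanishing on `Γ₂`:
      = Module.finrank k ↥(degForms k A n x (a - d) ⊓ J.restrictScalars k) := by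
  obtain ⟨t, Φ, hΦ, hmap⟩ := hAG
  have : Nontrivial A := not_subsingleton_iff_nontrivial.mp fun _ => hfail (Subsingleton.elim _ _)
  have ht : t = a := twist_eq_of_regularity hmap hΦ.1 hfail hok
  subst hI
  exact finrank_quotient_map_mkQ_eq_finrank_inf (LinearEquiv.ofBijective _ hΦ)
    (map_galeMap_annihilator Φ hΦ J) (map_galeMap_degForms hmap ht hd.le)

/-- **Cayley–Bacharach for arithmetically Gorenstein schemes**
(Eisenbud–Popescu, Corollary 2.9).  Suppose `Γ ⊂ ℙ(U)` is a finite arithmetically Gorenstein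
scheme and `Γ₁, Γ₂` are mutually residual subschemes of `Γ`.  For any integer `d < a(Γ)`, the
failure of `Γ₁` to impose independent conditions on forms of degree `d` equals the dimension
of the space of forms of degree `a(Γ) - d` vanishing on `Γ₂`. -/
theorem cayley_bacharach_arith_gorenstein
    (k : Type) [Field k] (A : Type) [CommRing A] [Algebra k A] [FiniteDimensional k A]
    (n : ℕ) (x : Fin n → A)
    (hAG : IsArithGorenstein k A n x)
    -- `a = a(Γ)` is the largest integer such that `Γ` fails to impose independent conditions
    -- on forms of degree `a` (the second condition also says `Γ` is closed in `ℙ(U)`):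
    (a : ℕ) (hfail : degForms k A n x a ≠ ⊤) (hok : ∀ b : ℕ, a < b → degForms k A n x b = ⊤)
    -- `Γ₁ = Spec (A/I)` and `Γ₂ = Spec (A/J)` are mutually residual subschemes of `Γ`:
    (I J : Ideal A) (hJ : J = I.annihilator) (hI : I = J.annihilator)
    (d : ℕ) (hd : d < a) :
    -- the failure of `Γ₁` to impose independent conditions on forms of degree `d` ...
    Module.finrank k
        ((A ⧸ I.restrictScalars k) ⧸
          Submodule.map (I.restrictScalars k).mkQ (degForms k A n x d))
      -- ... equals the number of forms of degree `a - d` vanishing on `Γ₂`: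
      = Module.finrank k ↥(degForms k A n x (a - d) ⊓ J.restrictScalars k) :=
  cayley_bacharach_arith_gorenstein_general k A n x hAG a hfail hok I J hI d hd
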